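/- Let f : (0,∞) → ℝ be convex and continuously differentiable, and let ρ, σ be n×n real symmetric matrices all of whose eigenvalues lie in (0,∞). Then the matrix Bregman divergence is nonnegative: Tr(f(ρ)) − Tr(f(σ)) − Tr(f'(σ)(ρ − σ)) ≥ 0, where f(ρ), f(σ), f'(σ) are defined by applying f and f' to the eigenvalues in the spectral decompositions of ρ and σ. -/

import Mathlib

open Matrix

/-- Applying a scalar function `g` to a real symmetric matrix via its spectral
decomposition (junk value `0` for non-Hermitian input). -/
noncomputable def matFun {n : ℕ} (g : ℝ → ℝ) (A : Matrix (Fin n) (Fin n) ℝ) :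
    Matrix (Fin n) (Fin n) ℝ :=
  if h : A.IsHermitian then h.cfc g else 0

/-! Writing `ρ = ∑ⱼ aⱼ uⱼuⱼᵀ` and `σ = ∑ᵢ bᵢ vᵢvᵢᵀ`, every trace in the Bregman divergence expands
over the weights `cᵢⱼ = ⟪vᵢ, uⱼ⟫²`; e.g. `Tr f(ρ) = Tr(1 · f(ρ)) = ∑ᵢⱼ cᵢⱼ f(aⱼ)`. Hence
`D_f(ρ‖σ) = ∑ᵢⱼ cᵢⱼ (f(aⱼ) - f(bᵢ) - f'(bᵢ)(aⱼ - bᵢ))`, a nonnegative combination of scalar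
Bregman divergences, each of which is nonnegative since a convex function lies above its
tangent lines. -/

theorem ConvexOn.add_deriv_mul_sub_le {S : Set ℝ} {f : ℝ → ℝ} {f' x y : ℝ}
    (hf : ConvexOn ℝ S f) (hx : x ∈ S) (hy : y ∈ S) (hderiv : HasDerivAt f f' y) :
    f y + f' * (x - y) ≤ f x := by
  rcases lt_trichotomy x y with hxy | rfl | hxy
  · have hslope := hf.slope_le_of_hasDerivAt hx hy hxy hderiv
    rw [slope_def_field, div_le_iff₀ (by linarith)] at hslope
    nlinarith
  · simp
  · have hslope := hf.le_slope_of_hasDerivAt hy hx hxy hderiv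
    rw [slope_def_field, le_div_iff₀ (by linarith)] at hslope
    nlinarith

namespace Matrix

variable {m : Type*} [Fintype m] [DecidableEq m]

lemma trace_diagonal_mul_mul_diagonal_mul_transpose (d e : m → ℝ) (W : Matrix m m ℝ) :
    (diagonal d * W * diagonal e * Wᵀ).trace = ∑ i, ∑ j, W i j ^ 2 * d i * e j :=
  Finset.sum_congr rfl fun _ _ => by
    rw [diag_apply, mul_apply]
    exact Finset.sum_congr rfl fun _ _ => by rw [mul_diagonal, diagonal_mul, transpose_apply]; ring

namespace IsHermitian
variable {A B : Matrix m m ℝ}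

lemma cfc_eq_mul_diagonal_mul_transpose (hA : A.IsHermitian) (g : ℝ → ℝ) :
    cfc g A = (hA.eigenvectorUnitary : Matrix m m ℝ) * diagonal (g ∘ hA.eigenvalues) *
      (hA.eigenvectorUnitary : Matrix m m ℝ)ᵀ := by
  rw [hA.cfc_eq, IsHermitian.cfc, Unitary.conjStarAlgAut_apply, RCLike.ofReal_real_eq_id,
    Function.id_comp, star_eq_conjTranspose, conjTranspose_eq_transpose_of_trivial]

noncomputable def eigenOverlap (hA : A.IsHermitian) (hB : B.IsHermitian) (i j : m) : ℝ :=
  ((hA.eigenvectorUnitary : Matrix m m ℝ)ᵀ * hB.eigenvectorUnitary) i j ^ 2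

lemma trace_cfc_mul_cfc (hA : A.IsHermitian) (hB : B.IsHermitian) (g h : ℝ → ℝ) :
    (cfc g A * cfc h B).trace =
      ∑ i, ∑ j, hA.eigenOverlap hB i j * g (hA.eigenvalues i) * h (hB.eigenvalues j) := by
  rw [hA.cfc_eq_mul_diagonal_mul_transpose, hB.cfc_eq_mul_diagonal_mul_transpose]
  set U := (hA.eigenvectorUnitary : Matrix m m ℝ)
  set V := (hB.eigenvectorUnitary : Matrix m m ℝ)
  set D := diagonal (g ∘ hA.eigenvalues)
  set E := diagonal (h ∘ hB.eigenvalues)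
  calc (U * D * Uᵀ * (V * E * Vᵀ)).trace = (U * (D * (Uᵀ * V) * E * Vᵀ)).trace := by
        simp only [mul_assoc]
    _ = (D * (Uᵀ * V) * E * Vᵀ * U).trace := trace_mul_comm _ _
    _ = (D * (Uᵀ * V) * E * (Uᵀ * V)ᵀ).trace := by
        rw [transpose_mul, transpose_transpose, mul_assoc _ Vᵀ]
    _ = _ := trace_diagonal_mul_mul_diagonal_mul_transpose _ _ _

lemma trace_cfc_sub_trace_cfc_sub_trace_cfc_mul_sub_eq_sum {ρ σ : Matrix m m ℝ}
    (hρ : ρ.IsHermitian) (hσ : σ.IsHermitian) (f f' : ℝ → ℝ) :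
    (cfc f ρ).trace - (cfc f σ).trace - (cfc f' σ * (ρ - σ)).trace =
      ∑ i, ∑ j, hσ.eigenOverlap hρ i j * (f (hρ.eigenvalues j) - f (hσ.eigenvalues i)
        - f' (hσ.eigenvalues i) * (hρ.eigenvalues j - hσ.eigenvalues i)) := by
  have hmul_id : cfc f' σ * σ = cfc (fun x ↦ f' x * id x) σ := by
    rw [cfc_mul f' id σ (σ.finite_real_spectrum.continuousOn _)
      (σ.finite_real_spectrum.continuousOn _), cfc_id ℝ σ hσ.isSelfAdjoint]
  calc (cfc f ρ).trace - (cfc f σ).trace - (cfc f' σ * (ρ - σ)).trace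
      = (cfc 1 σ * cfc f ρ).trace - (cfc f σ * cfc 1 ρ).trace
          - ((cfc f' σ * cfc id ρ).trace - (cfc (fun x ↦ f' x * id x) σ * cfc 1 ρ).trace) := by
        rw [cfc_one ℝ σ hσ.isSelfAdjoint, cfc_one ℝ ρ hρ.isSelfAdjoint,
          cfc_id ℝ ρ hρ.isSelfAdjoint, ← hmul_id, one_mul, mul_one, mul_one, mul_sub, trace_sub]
    _ = _ := by
        simp only [hσ.trace_cfc_mul_cfc hρ, ← Finset.sum_sub_distrib]
        refine Finset.sum_congr rfl fun i _ => Finset.sum_congr rfl fun j _ => ?_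
        simp only [Pi.one_apply, id]
        ring

end IsHermitian
end Matrix

lemma matFun_eq_cfc {n : ℕ} {A : Matrix (Fin n) (Fin n) ℝ} (hA : A.IsHermitian) (g : ℝ → ℝ) :
    matFun g A = cfc g A := by
  rw [matFun, dif_pos hA, hA.cfc_eq]

theorem matrix_bregman_nonneg_general {n : ℕ} (f f' : ℝ → ℝ)
    (hconv : ConvexOn ℝ (Set.Ioi (0:ℝ)) f)
    (hderiv : ∀ x ∈ Set.Ioi (0:ℝ), HasDerivAt f (f' x) x)
    (ρ σ : Matrix (Fin n) (Fin n) ℝ) (hρ : ρ.PosDef) (hσ : σ.PosDef) :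
    0 ≤ (matFun f ρ).trace - (matFun f σ).trace - (matFun f' σ * (ρ - σ)).trace := by
  rw [matFun_eq_cfc hρ.1, matFun_eq_cfc hσ.1, matFun_eq_cfc hσ.1,
    hρ.1.trace_cfc_sub_trace_cfc_sub_trace_cfc_mul_sub_eq_sum hσ.1]
  refine Finset.sum_nonneg fun i _ => Finset.sum_nonneg fun j _ => mul_nonneg (sq_nonneg _) ?_
  have hb := hσ.eigenvalues_pos i
  have := hconv.add_deriv_mul_sub_le (hρ.eigenvalues_pos j) hb (hderiv _ hb)
  linarith

/-- for f : (0,∞) → ℝ convex and continuously differentiable (with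
derivative f' on (0,∞)) and ρ, σ real symmetric matrices with all eigenvalues in (0,∞)
(i.e. positive definite), the matrix Bregman divergence is nonnegative:
Tr(f(ρ)) − Tr(f(σ)) − Tr(f'(σ)(ρ − σ)) ≥ 0. -/
theorem matrix_bregman_nonneg {n : ℕ} (f f' : ℝ → ℝ)
    (hconv : ConvexOn ℝ (Set.Ioi (0:ℝ)) f)
    (hderiv : ∀ x ∈ Set.Ioi (0:ℝ), HasDerivAt f (f' x) x)
    (hcont : ContinuousOn f' (Set.Ioi (0:ℝ)))
    (ρ σ : Matrix (Fin n) (Fin n) ℝ) (hρ : ρ.PosDef) (hσ : σ.PosDef) :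
    0 ≤ (matFun f ρ).trace - (matFun f σ).trace - (matFun f' σ * (ρ - σ)).trace :=
  matrix_bregman_nonneg_general f f' hconv hderiv ρ σ hρ hσ
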